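/- A ring R is a UQ ring if and only if U(R) + (U(R) ∩ Z(R)) ⊆ QN(R) (equivalently, U(R) + (U(R) ∩ Z(R)) = QN(R)). -/

import Mathlib

/-- An element `a` of a ring is quasinilpotent if `1 - a*x` is a unit
for every `x` commuting with `a`. -/
def IsQuasinilpotent {R : Type*} [Ring R] (a : R) : Prop :=
  ∀ x : R, x * a = a * x → IsUnit (1 - a * x)

/-- A ring `R` is a UQ ring if `U(R) = 1 + QN(R)`. -/
def IsUQRing (R : Type*) [Ring R] : Prop :=
  ∀ u : R, IsUnit u ↔ ∃ q : R, IsQuasinilpotent q ∧ u = 1 + q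

/-! `U + (U ∩ Z)` lies in `QN` in a UQ ring: for units `u` and central `v`,
`u + v = (-v) * (-v⁻¹ * u - 1)`, where `-v⁻¹ * u - 1 ∈ QN` by the UQ property, and `QN` is
stable under multiplication by central units. Conversely, every unit `u = 1 + (u + (-1))`. -/

section

variable {R : Type*} [Ring R]

theorem IsQuasinilpotent.isUnit_one_add {q : R} (hq : IsQuasinilpotent q) : IsUnit (1 + q) := by
  simpa using hq (-1) (by simp)

theorem isUQRing_iff : IsUQRing R ↔ ∀ u : R, IsUnit u → IsQuasinilpotent (u - 1) := by
  refine ⟨fun h u hu => ?_, fun h u => ⟨fun hu => ⟨u - 1, h u hu, by abel⟩, ?_⟩⟩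
  · obtain ⟨q, hq, rfl⟩ := (h u).mp hu
    simpa using hq
  · rintro ⟨q, hq, rfl⟩
    exact hq.isUnit_one_add

theorem IsQuasinilpotent.units_mul_of_mem_center {q : R} (hq : IsQuasinilpotent q) (c : Rˣ)
    (hc : (c : R) ∈ Set.center R) : IsQuasinilpotent (c * q) := by
  have hc : ∀ y : R, y * c = c * y := Semigroup.mem_center_iff.mp hc
  intro x hx
  -- `c` is central and cancellable, so `x` commutes with `q` itself
  have hxq : x * q = q * x := by
    rw [← mul_assoc, hc, mul_assoc, mul_assoc] at hx
    exact c.mul_right_inj.mp hx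
  have hcx : (c * x) * q = q * (c * x) := by
    rw [mul_assoc, hxq, ← mul_assoc, ← mul_assoc, hc]
  rw [mul_assoc, ← mul_assoc, ← hc q, mul_assoc]
  exact hq _ hcx

end

theorem uq_iff_unit_add_central_unit_qn (R : Type*) [Ring R] :
    IsUQRing R ↔
      ∀ u v : R, IsUnit u → IsUnit v → v ∈ Set.center R →
        IsQuasinilpotent (u + v) := by
  rw [isUQRing_iff]
  constructor
  · rintro hUQ u _ hu ⟨w, rfl⟩ hw
    have hsum : u + w = ((-w : Rˣ) : R) * (-(↑w⁻¹ * u) - 1) := by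
      simp only [Units.val_neg, neg_mul, mul_neg, mul_sub, ← mul_assoc, Units.mul_inv, one_mul, mul_one]
      abel
    rw [hsum]
    exact (hUQ _ ((w⁻¹).isUnit.mul hu).neg).units_mul_of_mem_center _
      (by simpa using Set.neg_mem_center hw)
  · intro h u hu
    simpa [sub_eq_add_neg] using h u (-1) hu isUnit_one.neg (Set.neg_mem_center Set.one_mem_center)
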